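/- arXiv:2501.15402 — 3 statements merged into one kernel-verified Lean document; each statement's English description precedes it below -/
import Mathlib

section
/- Let n ≥ 1 and 1 ≤ k ≤ n. In the ℚ-vector space of functions from the k-element subsets of {0,1,…,n} to ℚ, let L be the ℤ-submodule generated by the functions f_1,…,f_n together with t₀, where f_j(I) = |I ∩ {0,…,j−1}| − kj/(n+1) and t₀(I) = 1/binom(n+1,k). Then the set of functions in L that take integer values on every k-element subset is exactly the ℤ-submodule generated by the functions v_0,…,v_n, where v_i(I) = [i ∈ I] − [i ≤ k−2] (here [·] denotes 1 if the condition holds and 0 otherwise). (This is the combinatorial form of Proposition 3.3: {γ_0^∨,…,γ_n^∨} is an integral basis of the coweight lattice of G(ψ) = ψ(SL(V))·Z(GL(Λ^k V)).) -/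
/-!
Telescoping, the lattice spanned by `ω_1^∨, …, ω_n^∨` is the one spanned by the differences
`ω_{i+1}^∨ - ω_i^∨ = [i ∈ I] - k/(n+1)` (with `ω_0^∨ = ω_{n+1}^∨ = 0`), and each of these differs
from `γ_i^∨` by an integral multiple of `t₀`, because `k/(n+1) = C(n, k-1)/C(n+1, k)`. Hence
`L = ⟨γ_0^∨, …, γ_n^∨⟩ + ℤ t₀`. The `γ_i^∨` are integer valued and sum to the constant `1`, so if
`γ + a t₀` is integer valued, then `a t₀` is an integer constant and already lies in `⟨γ_i^∨⟩`.
-/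

open Finset

def integerValued (σ : Type*) : Submodule ℤ (σ → ℚ) where
  carrier := {g | ∀ s, ∃ m : ℤ, g s = m}
  add_mem' {a b} ha hb s := by
    obtain ⟨x, hx⟩ := ha s
    obtain ⟨y, hy⟩ := hb s
    exact ⟨x + y, by simp [hx, hy]⟩
  zero_mem' _ := ⟨0, by simp⟩
  smul_mem' c a ha s := by
    obtain ⟨x, hx⟩ := ha s
    exact ⟨c * x, by simp [hx]⟩

theorem mem_sup_span_const_and_integerValued_iff {σ : Type*} [Nonempty σ]
    {M : Submodule ℤ (σ → ℚ)} (hM : M ≤ integerValued σ) (h1 : 1 ∈ M) (c : ℚ) {g : σ → ℚ} :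
    g ∈ M ⊔ Submodule.span ℤ {fun _ => c} ∧ g ∈ integerValued σ ↔ g ∈ M := by
  refine ⟨fun ⟨hg, hgZ⟩ => ?_, fun hg => ⟨Submodule.mem_sup_left hg, hM hg⟩⟩
  obtain ⟨y, hy, z, hz, rfl⟩ := Submodule.mem_sup.1 hg
  obtain ⟨a, rfl⟩ := Submodule.mem_span_singleton.1 hz
  obtain ⟨s⟩ := ‹Nonempty σ›
  obtain ⟨m, hm⟩ := hgZ s
  obtain ⟨my, hmy⟩ := hM hy s
  -- evaluating at a single point shows that the constant `a • c` is an integer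
  have hac : a • (fun _ => c) = (m - my) • (1 : σ → ℚ) := by
    funext t
    simp only [Pi.add_apply, Pi.smul_apply, Pi.one_apply] at hm ⊢
    simp only [zsmul_eq_mul, mul_one] at hm ⊢
    push_cast
    linarith
  rw [hac]
  exact add_mem hy (Submodule.smul_mem _ _ h1)

theorem Submodule.span_range_sup_eq_of_forall_sub_mem {R M ι : Type*} [Ring R] [AddCommGroup M]
    [Module R M] {v e : ι → M} {P : Submodule R M} (h : ∀ i, v i - e i ∈ P) :
    span R (Set.range v) ⊔ P = span R (Set.range e) ⊔ P := by
  have key : ∀ v e : ι → M, (∀ i, v i - e i ∈ P) →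
      span R (Set.range v) ⊔ P ≤ span R (Set.range e) ⊔ P := by
    intro v e h
    refine sup_le (span_le.2 ?_) le_sup_right
    rintro _ ⟨i, rfl⟩
    rw [← sub_add_cancel (v i) (e i)]
    exact add_mem (mem_sup_right (h i)) (mem_sup_left (subset_span ⟨i, rfl⟩))
  exact le_antisymm (key v e h) (key e v fun i => by simpa using neg_mem (h i))

theorem Submodule.span_range_succ_eq_span_range_sub {R M : Type*} [Ring R] [AddCommGroup M]
    [Module R M] {F : ℕ → M} {n : ℕ} (h0 : F 0 = 0) (hn : F (n + 1) = 0) :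
    span R (Set.range fun j : Fin n => F (j + 1)) =
      span R (Set.range fun i : Fin (n + 1) => F (i + 1) - F i) := by
  refine le_antisymm (span_le.2 ?_) (span_le.2 ?_)
  · rintro _ ⟨j, rfl⟩
    show F (j + 1) ∈ _
    rw [← sub_zero (F (j + 1)), ← h0, ← Finset.sum_range_sub]
    exact sum_mem fun i hi => subset_span ⟨⟨i, by simp at hi; omega⟩, rfl⟩
  · have hF : ∀ m ≤ n + 1, F m ∈ span R (Set.range fun j : Fin n => F (j + 1)) := by
      rintro (_ | j) hj
      · simp [h0]
      · rcases (Nat.lt_or_eq_of_le (Nat.le_of_succ_le_succ hj)) with hj | rfl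
        · exact subset_span ⟨⟨j, hj⟩, rfl⟩
        · simp [hn]
    rintro _ ⟨i, rfl⟩
    exact sub_mem (hF _ i.2) (hF _ i.2.le)

/-- `ω_m^∨`, so that the statement's `f_j` is `fundamentalCoweight n k (j + 1)`. -/
def fundamentalCoweight (n k m : ℕ) (I : {I : Finset (Fin (n + 1)) // I.card = k}) : ℚ :=
  ((I.1.filter fun i : Fin (n + 1) => (i : ℕ) < m).card : ℚ) - k * m / (n + 1)

def gammaCoweight (n k : ℕ) (i : Fin (n + 1)) (I : {I : Finset (Fin (n + 1)) // I.card = k}) : ℚ :=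
  (if i ∈ I.1 then 1 else 0) - if (i : ℕ) + 2 ≤ k then 1 else 0

section

variable {n k : ℕ}

theorem fundamentalCoweight_zero : fundamentalCoweight n k 0 = 0 := by
  funext I
  simp [fundamentalCoweight]

theorem fundamentalCoweight_top : fundamentalCoweight n k (n + 1) = 0 := by
  funext I
  have hI : I.1.filter (fun i : Fin (n + 1) => (i : ℕ) < n + 1) = I.1 :=
    filter_true_of_mem fun i _ => i.isLt
  simp only [fundamentalCoweight, hI, I.2, Pi.zero_apply]
  push_cast
  field_simp
  ring

theorem fundamentalCoweight_succ_sub (i : Fin (n + 1)) :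
    fundamentalCoweight n k (i + 1) - fundamentalCoweight n k i =
      fun I => (if i ∈ I.1 then 1 else 0) - (k : ℚ) / (n + 1) := by
  funext I
  have hcard : ((I.1.filter fun j : Fin (n + 1) => (j : ℕ) < i + 1).card : ℚ) =
      (I.1.filter fun j : Fin (n + 1) => (j : ℕ) < i).card + if i ∈ I.1 then 1 else 0 := by
    rw [natCast_card_filter, natCast_card_filter, ← sum_ite_eq' I.1 i (fun _ => (1 : ℚ)),
      ← sum_add_distrib]
    refine sum_congr rfl fun j _ => ?_
    by_cases hji : j = i
    · simp [hji]
    · have hlt : (j : ℕ) < i + 1 ↔ (j : ℕ) < i := by have := Fin.val_ne_of_ne hji; omega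
      simp [hji, hlt]
  simp only [fundamentalCoweight, Pi.sub_apply, hcard]
  push_cast
  ring

theorem gammaCoweight_mem_integerValued (i : Fin (n + 1)) :
    gammaCoweight n k i ∈ integerValued _ := fun I =>
  ⟨(if i ∈ I.1 then 1 else 0) - if (i : ℕ) + 2 ≤ k then 1 else 0, by
    simp only [gammaCoweight]; push_cast; rfl⟩

theorem sum_gammaCoweight (hk : 1 ≤ k) (hkn : k ≤ n + 1) : ∑ i, gammaCoweight n k i = 1 := by
  funext I
  have hlt : ∀ i : Fin (n + 1), (i : ℕ) + 2 ≤ k ↔ (i : ℕ) < k - 1 := fun i => by omega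
  simp only [Finset.sum_apply, gammaCoweight, sum_sub_distrib, sum_boole, hlt, Pi.one_apply]
  rw [filter_mem_eq_inter, univ_inter, I.2, Fin.card_filter_val_lt, min_eq_right (by omega),
    Nat.cast_sub hk]
  ring

theorem gammaCoweight_sub_mem_span (hk : 1 ≤ k) (hkn : k ≤ n + 1) (i : Fin (n + 1)) :
    gammaCoweight n k i - (fundamentalCoweight n k (i + 1) - fundamentalCoweight n k i) ∈
      Submodule.span ℤ {fun _ => (1 : ℚ) / (n + 1).choose k} := by
  obtain ⟨k, rfl⟩ : ∃ k', k = k' + 1 := ⟨k - 1, by omega⟩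
  have hN : ((n + 1).choose (k + 1) : ℚ) ≠ 0 := by exact_mod_cast (Nat.choose_pos hkn).ne'
  have hbin : ((k + 1 : ℕ) : ℚ) / (n + 1) = n.choose k / (n + 1).choose (k + 1) := by
    rw [div_eq_div_iff (by positivity) hN]
    norm_cast
    linarith [Nat.add_one_mul_choose_eq n k]
  rw [Submodule.mem_span_singleton, fundamentalCoweight_succ_sub]
  refine ⟨n.choose k - if (i : ℕ) + 2 ≤ k + 1 then (n + 1).choose (k + 1) else 0, ?_⟩
  funext I
  simp only [gammaCoweight, Pi.smul_apply, Pi.sub_apply, zsmul_eq_mul, hbin]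
  split_ifs <;> push_cast <;> field_simp <;> ring

end

theorem integral_coweight_lattice_of_weighted_grassmannian_general
    (n k : ℕ) (hk1 : 1 ≤ k) (hkn : k ≤ n)
    (g : {I : Finset (Fin (n + 1)) // I.card = k} → ℚ) :
    (g ∈ Submodule.span ℤ
        (insert (fun _ : {I : Finset (Fin (n + 1)) // I.card = k} =>
            (1 : ℚ) / (Nat.choose (n + 1) k))
          (Set.range (fun (j : Fin n) (I : {I : Finset (Fin (n + 1)) // I.card = k}) =>
            (((I.1.filter (fun i : Fin (n + 1) => (i : ℕ) < (j : ℕ) + 1)).card : ℚ)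
              - (k * ((j : ℕ) + 1)) / (n + 1)))))
      ∧ (∀ I : {I : Finset (Fin (n + 1)) // I.card = k}, ∃ m : ℤ, g I = (m : ℚ)))
    ↔ g ∈ Submodule.span ℤ
        (Set.range (fun (i : Fin (n + 1)) (I : {I : Finset (Fin (n + 1)) // I.card = k}) =>
          ((if i ∈ I.1 then (1 : ℚ) else 0) - (if (i : ℕ) + 2 ≤ k then 1 else 0)))) := by
  obtain ⟨I, -, hI⟩ := exists_subset_card_eq (s := (univ : Finset (Fin (n + 1)))) (n := k)
    (by simp; omega)
  have : Nonempty {I : Finset (Fin (n + 1)) // I.card = k} := ⟨⟨I, hI⟩⟩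
  have hf : (Set.range fun (j : Fin n) (I : {I : Finset (Fin (n + 1)) // I.card = k}) =>
      (((I.1.filter (fun i : Fin (n + 1) => (i : ℕ) < (j : ℕ) + 1)).card : ℚ)
        - (k * ((j : ℕ) + 1)) / (n + 1))) =
      Set.range fun j : Fin n => fundamentalCoweight n k (j + 1) := by
    congr! 3 with j I
    simp only [fundamentalCoweight, Nat.cast_succ]
  change _ ↔ g ∈ Submodule.span ℤ (Set.range (gammaCoweight n k))
  rw [hf, Submodule.span_insert, sup_comm,
    Submodule.span_range_succ_eq_span_range_sub fundamentalCoweight_zero fundamentalCoweight_top,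
    ← Submodule.span_range_sup_eq_of_forall_sub_mem (gammaCoweight_sub_mem_span hk1 (by omega))]
  refine mem_sup_span_const_and_integerValued_iff
    (Submodule.span_le.2 (Set.range_subset_iff.2 gammaCoweight_mem_integerValued)) ?_ _
  rw [← sum_gammaCoweight hk1 (by omega)]
  exact sum_mem fun i _ => Submodule.subset_span ⟨i, rfl⟩

/-- Proposition 3.3 (combinatorial form). Inside the ℚ-vector space of functions from
the `k`-element subsets of `{0,…,n}` to `ℚ`, let `L` be the ℤ-submodule generated by the
functions `f_1,…,f_n` (where `f_j I = |I ∩ {0,…,j−1}| − k·j/(n+1)`) together with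
`t₀ I = 1/(n+1 choose k)`. Then the functions in `L` taking integer values on every
`k`-element subset are exactly the ℤ-submodule generated by
`v_i I = [i ∈ I] − [i ≤ k−2]`, `i = 0,…,n`. -/
theorem integral_coweight_lattice_of_weighted_grassmannian
    (n k : ℕ) (hn : 1 ≤ n) (hk1 : 1 ≤ k) (hkn : k ≤ n)
    (g : {I : Finset (Fin (n + 1)) // I.card = k} → ℚ) :
    (g ∈ Submodule.span ℤ
        (insert (fun _ : {I : Finset (Fin (n + 1)) // I.card = k} =>
            (1 : ℚ) / (Nat.choose (n + 1) k))
          (Set.range (fun (j : Fin n) (I : {I : Finset (Fin (n + 1)) // I.card = k}) =>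
            (((I.1.filter (fun i : Fin (n + 1) => (i : ℕ) < (j : ℕ) + 1)).card : ℚ)
              - (k * ((j : ℕ) + 1)) / (n + 1)))))
      ∧ (∀ I : {I : Finset (Fin (n + 1)) // I.card = k}, ∃ m : ℤ, g I = (m : ℚ)))
    ↔ g ∈ Submodule.span ℤ
        (Set.range (fun (i : Fin (n + 1)) (I : {I : Finset (Fin (n + 1)) // I.card = k}) =>
          ((if i ∈ I.1 then (1 : ℚ) else 0) - (if (i : ℕ) + 2 ≤ k then 1 else 0)))) :=
  integral_coweight_lattice_of_weighted_grassmannian_general n k hk1 hkn g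
end

section
/- Let n ≥ 1 and 1 ≤ k ≤ n. For any a_0,…,a_n ∈ ℚ and any k-element subset I = {i_1 < ⋯ < i_k} of {0,1,…,n}, one has ∑_{j=1}^{n} (a_{j−1} − a_j)·f_j(I) + ( (k/(n+1))·∑_{i=0}^{n} a_i − ∑_{l=0}^{k−2} a_l ) = −∑_{l=0}^{k−2} a_l + ∑_{j=1}^{k} a_{i_j}, where f_j(I) = |I ∩ {0,…,j−1}| − kj/(n+1). (This is Corollary 3.5: the coweight ∑ a_i γ_i^∨ induces the ℤ-grading deg(T_{i_1<⋯<i_k}) = −∑_{l=0}^{k−2} a_l + ∑_{j=1}^{k} a_{i_j} on the Plücker coordinates.) -/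
lemma tele_Ico (f : ℕ → ℚ) (n i : ℕ) (h : i ≤ n) :
    ∑ j ∈ Finset.Ico i n, (f j - f (j + 1)) = f i - f n := by
  rw [Finset.sum_Ico_eq_sub _ h, Finset.sum_range_sub' f, Finset.sum_range_sub' f]
  ring

lemma tele_weighted (f : ℕ → ℚ) (n : ℕ) :
    ∑ j ∈ Finset.range n, (f j - f (j + 1)) * ((j : ℚ) + 1)
      = (∑ j ∈ Finset.range n, f j) - n * f n := by
  induction n with
  | zero => simp
  | succ n ih =>
    rw [Finset.sum_range_succ, ih, Finset.sum_range_succ]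
    push_cast
    ring

/-- Corollary 3.5. For rationals `a_0,…,a_n` and a `k`-element subset
`I = {i_1 < ⋯ < i_k}` of `{0,…,n}`, the coweight `∑ a_i γ_i^∨` induces the grading
`∑_{j=1}^n (a_{j−1} − a_j)·f_j(I) + ((k/(n+1))·∑ a_i − ∑_{l=0}^{k−2} a_l)
  = −∑_{l=0}^{k−2} a_l + ∑_{j=1}^k a_{i_j}`,
where `f_j(I) = |I ∩ {0,…,j−1}| − k·j/(n+1)`. -/
theorem grading_of_weighted_grassmannian
    (n k : ℕ) (hn : 1 ≤ n) (hk1 : 1 ≤ k) (hkn : k ≤ n)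
    (a : Fin (n + 1) → ℚ) (I : Finset (Fin (n + 1))) (hI : I.card = k) :
    (∑ j : Fin n, (a j.castSucc - a j.succ) *
        (((I.filter (fun i : Fin (n + 1) => (i : ℕ) < (j : ℕ) + 1)).card : ℚ)
          - (k * ((j : ℕ) + 1)) / (n + 1)))
      + ((k / (n + 1)) * (∑ i : Fin (n + 1), a i)
          - ∑ i : Fin (n + 1), (if (i : ℕ) + 2 ≤ k then a i else 0))
    = -(∑ i : Fin (n + 1), (if (i : ℕ) + 2 ≤ k then a i else 0)) + ∑ i ∈ I, a i := by
  set S := ∑ i : Fin (n + 1), (if (i : ℕ) + 2 ≤ k then a i else 0) with hS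
  suffices h : (∑ j : Fin n, (a j.castSucc - a j.succ) *
        (((I.filter (fun i : Fin (n + 1) => (i : ℕ) < (j : ℕ) + 1)).card : ℚ)
          - (k * ((j : ℕ) + 1)) / (n + 1)))
      + (k / (n + 1)) * (∑ i : Fin (n + 1), a i) = ∑ i ∈ I, a i by
    linarith
  -- extend a to ℕ
  set f : ℕ → ℚ := fun m => if h : m < n + 1 then a ⟨m, h⟩ else 0 with hf
  have hfa : ∀ i : Fin (n + 1), f (i : ℕ) = a i := by
    intro i
    simp only [hf, i.isLt, dif_pos]
  have hfn : f n = a (Fin.last n) := hfa (Fin.last n)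
  -- the filter card as a sum
  have hc : ∀ j : ℕ,
      ((I.filter (fun i : Fin (n + 1) => (i : ℕ) < j + 1)).card : ℚ)
        = ∑ i ∈ I, (if (i : ℕ) ≤ j then (1 : ℚ) else 0) := by
    intro j
    rw [Finset.card_filter]
    push_cast
    refine Finset.sum_congr rfl fun i _ => ?_
    simp [Nat.lt_succ_iff]
  -- rewrite Fin-sum as range-sum
  have hstep : (∑ j : Fin n, (a j.castSucc - a j.succ) *
        (((I.filter (fun i : Fin (n + 1) => (i : ℕ) < (j : ℕ) + 1)).card : ℚ)
          - (k * ((j : ℕ) + 1)) / (n + 1)))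
      = ∑ j ∈ Finset.range n, (f j - f (j + 1)) *
        (((I.filter (fun i : Fin (n + 1) => (i : ℕ) < j + 1)).card : ℚ)
          - (k * ((j : ℚ) + 1)) / (n + 1)) := by
    rw [← Fin.sum_univ_eq_sum_range]
    refine Finset.sum_congr rfl fun j _ => ?_
    have h1 : a j.castSucc = f (j : ℕ) := (hfa j.castSucc).symm
    have h2 : a j.succ = f ((j : ℕ) + 1) := by
      have := (hfa j.succ).symm
      simpa using this
    rw [h1, h2]
  rw [hstep]
  -- split the sum
  have hsplit : ∑ j ∈ Finset.range n, (f j - f (j + 1)) *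
        (((I.filter (fun i : Fin (n + 1) => (i : ℕ) < j + 1)).card : ℚ)
          - (k * ((j : ℚ) + 1)) / (n + 1))
      = (∑ j ∈ Finset.range n, (f j - f (j + 1)) *
          ((I.filter (fun i : Fin (n + 1) => (i : ℕ) < j + 1)).card : ℚ))
        - (k / (n + 1)) * ∑ j ∈ Finset.range n, (f j - f (j + 1)) * ((j : ℚ) + 1) := by
    rw [Finset.mul_sum, ← Finset.sum_sub_distrib]
    refine Finset.sum_congr rfl fun j _ => ?_
    ring
  rw [hsplit, tele_weighted]
  -- first sum: swap and telescope
  have hswap : ∑ j ∈ Finset.range n, (f j - f (j + 1)) *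
        ((I.filter (fun i : Fin (n + 1) => (i : ℕ) < j + 1)).card : ℚ)
      = ∑ i ∈ I, (a i - f n) := by
    have : ∀ j ∈ Finset.range n, (f j - f (j + 1)) *
        ((I.filter (fun i : Fin (n + 1) => (i : ℕ) < j + 1)).card : ℚ)
        = ∑ i ∈ I, (if (i : ℕ) ≤ j then (f j - f (j + 1)) else 0) := by
      intro j _
      rw [hc j, Finset.mul_sum]
      refine Finset.sum_congr rfl fun i _ => ?_
      split <;> ring
    rw [Finset.sum_congr rfl this, Finset.sum_comm]
    refine Finset.sum_congr rfl fun i _ => ?_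
    have hi : (i : ℕ) ≤ n := Nat.lt_succ_iff.mp i.isLt
    have : ∑ j ∈ Finset.range n, (if (i : ℕ) ≤ j then (f j - f (j + 1)) else 0)
        = ∑ j ∈ Finset.Ico (i : ℕ) n, (f j - f (j + 1)) := by
      rw [← Finset.sum_filter]
      congr 1
      ext j
      simp [Finset.mem_Ico, Finset.mem_range, Finset.mem_filter]
      tauto
    rw [this, tele_Ico f n (i : ℕ) hi, hfa]
  rw [hswap]
  -- total sum over Fin (n+1)
  have htot : ∑ i : Fin (n + 1), a i = (∑ j ∈ Finset.range n, f j) + f n := by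
    rw [← Finset.sum_range_succ]
    rw [← Fin.sum_univ_eq_sum_range]
    exact Finset.sum_congr rfl fun i _ => (hfa i).symm
  rw [htot, Finset.sum_sub_distrib, Finset.sum_const, hI]
  have hne : ((n : ℚ) + 1) ≠ 0 := by positivity
  field_simp
  ring
end

section
/- Let n ≥ 1 and 1 ≤ k ≤ n+1. Let M be the (n+1)×(n+1) matrix over ℚ whose first n rows are given by M_{i,i} = 1, M_{i,i+1} = −1 and M_{i,j} = 0 otherwise (for i = 0,…,n−1, columns j = 0,…,n), and whose last row has entries α_k = (k/(n+1) − 1)·binom(n+1,k) in columns 0,…,k−2 and β_k = (k/(n+1))·binom(n+1,k) = binom(n,k−1) in columns k−1,…,n. Then det(M) = binom(n+1,k). -/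
/-- The determinant of the `(n+1)×(n+1)` matrix `M` parametrising the coweight lattice of
the weighted Grassmannian: its first `n` rows have `M_{i,i} = 1`, `M_{i,i+1} = −1` and `0`
elsewhere, and its last row has `α_k = (k/(n+1) − 1)·C(n+1,k)` in columns `0,…,k−2` and
`β_k = (k/(n+1))·C(n+1,k)` in columns `k−1,…,n`. Then `det(M) = C(n+1,k)`. -/
theorem det_coweight_basis_matrix (n k : ℕ) (hn : 1 ≤ n) (hk1 : 1 ≤ k) (hk : k ≤ n + 1) :
    (Matrix.of (fun i j : Fin (n + 1) =>
        if (i : ℕ) < n then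
          (if j = i then (1 : ℚ) else if (j : ℕ) = (i : ℕ) + 1 then -1 else 0)
        else
          (if (j : ℕ) + 1 < k then ((k : ℚ) / (n + 1) - 1) * (Nat.choose (n + 1) k)
           else ((k : ℚ) / (n + 1)) * (Nat.choose (n + 1) k)))).det
    = (Nat.choose (n + 1) k : ℚ) := by
  set α : ℚ := ((k : ℚ) / (n + 1) - 1) * (Nat.choose (n + 1) k) with hα
  set β : ℚ := ((k : ℚ) / (n + 1)) * (Nat.choose (n + 1) k) with hβ
  set M : Matrix (Fin (n+1)) (Fin (n+1)) ℚ := Matrix.of (fun i j : Fin (n + 1) =>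
        if (i : ℕ) < n then
          (if j = i then (1 : ℚ) else if (j : ℕ) = (i : ℕ) + 1 then -1 else 0)
        else
          (if (j : ℕ) + 1 < k then α else β)) with hM
  set U : Matrix (Fin (n+1)) (Fin (n+1)) ℚ :=
    Matrix.of (fun i j : Fin (n + 1) => if i ≤ j then (1:ℚ) else 0) with hUdef
  have hUtri : U.BlockTriangular id := by
    intro i j hij
    simp only [U, Matrix.of_apply]
    exact if_neg (not_le.mpr hij)
  have hUdet : U.det = 1 := by
    rw [Matrix.det_of_upperTriangular hUtri]
    simp [U]
  -- key: rows 0..n-1 of M*U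
  have key : ∀ i j : Fin (n+1), (i : ℕ) < n → (M * U) i j = (if j = i then 1 else 0) := by
    intro i j hi
    have hi1 : (i : ℕ) + 1 < n + 1 := by omega
    set i1 : Fin (n+1) := ⟨(i : ℕ) + 1, hi1⟩ with hi1def
    have hvi1 : (i1 : ℕ) = (i : ℕ) + 1 := rfl
    rw [Matrix.mul_apply]
    have hpt : ∀ c : Fin (n+1), M i c * U c j =
        (if c = i then U i j else 0) + (if c = i1 then -U i1 j else 0) := by
      intro c
      simp only [M, U, Matrix.of_apply, if_pos hi]
      by_cases h : c = i
      · have h3 : ¬ c = i1 := by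
          intro hh
          have := Fin.ext_iff.mp hh
          rw [Fin.ext_iff.mp h, hvi1] at this; omega
        rw [if_pos h, if_pos h, if_neg h3, one_mul, h, add_zero]
      · by_cases h2 : (c:ℕ) = (i:ℕ)+1
        · have h3 : c = i1 := Fin.ext (by rw [hvi1, h2])
          rw [if_neg h, if_pos h2, if_neg h, if_pos h3, h3, zero_add, neg_one_mul]
        · have h3 : ¬ c = i1 := fun hh => h2 (by rw [hh, hvi1])
          rw [if_neg h, if_neg h2, if_neg h, if_neg h3, zero_mul, add_zero]
    rw [Finset.sum_congr rfl (fun c _ => hpt c), Finset.sum_add_distrib,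
      Finset.sum_ite_eq' Finset.univ i, Finset.sum_ite_eq' Finset.univ i1]
    simp only [Finset.mem_univ, if_true, U, Matrix.of_apply]
    by_cases h : j = i
    · have h0 : i ≤ j := le_of_eq h.symm
      have h1 : ¬ i1 ≤ j := by
        intro hh; rw [Fin.le_def, hvi1] at hh
        have : (j:ℕ) = (i:ℕ) := Fin.ext_iff.mp h
        omega
      rw [if_pos h0, if_neg h1, if_pos h, neg_zero, add_zero]
    · rw [if_neg h]
      have hne : (j:ℕ) ≠ (i:ℕ) := fun hh => h (Fin.ext hh)
      by_cases h2 : i ≤ j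
      · have h3 : i1 ≤ j := by
          rw [Fin.le_def] at h2 ⊢; rw [hvi1]; omega
        rw [if_pos h2, if_pos h3]; ring
      · have h3 : ¬ i1 ≤ j := by
          rw [Fin.le_def] at h2 ⊢; rw [hvi1]; omega
        rw [if_neg h2, if_neg h3]; ring
  have hlast : ∀ i : Fin (n+1), ¬ ((i:ℕ) < n) → i = Fin.last n := by
    intro i hi; ext; simp [Fin.last]; omega
  have htri : (M * U).BlockTriangular OrderDual.toDual := by
    intro i j hij
    have hij' : (j : ℕ) > (i : ℕ) := hij
    have hi : (i : ℕ) < n := by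
      have := j.isLt; omega
    rw [key i j hi, if_neg (by intro h; subst h; omega)]
  have hprod : (M * U).det = ∏ i, (M * U) i i := Matrix.det_of_lowerTriangular _ htri
  have hdiag : ∏ i, (M * U) i i = (M * U) (Fin.last n) (Fin.last n) := by
    rw [Fin.prod_univ_castSucc]
    have : ∀ i : Fin n, (M * U) i.castSucc i.castSucc = 1 := by
      intro i
      rw [key _ _ (by simp)]
      simp
    simp [this]
  have hrowsum : (M * U) (Fin.last n) (Fin.last n) = (Nat.choose (n+1) k : ℚ) := by
    rw [Matrix.mul_apply]
    have hpt : ∀ c : Fin (n+1), M (Fin.last n) c * U c (Fin.last n) =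
        (if (c : ℕ) + 1 < k then α else β) := by
      intro c
      have h1 : ¬ ((Fin.last n : Fin (n+1)) : ℕ) < n := by simp
      have h2 : c ≤ Fin.last n := Fin.le_last c
      simp [M, U, h1, h2]
    rw [Finset.sum_congr rfl (fun c _ => hpt c)]
    rw [Fin.sum_univ_eq_sum_range (fun c => if c + 1 < k then α else β)]
    have hsplit : Finset.range (n+1) = Finset.Ico 0 (k-1) ∪ Finset.Ico (k-1) (n+1) := by
      rw [Finset.Ico_union_Ico_eq_Ico (by omega) (by omega), ← Finset.range_eq_Ico]
    rw [hsplit, Finset.sum_union (by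
      apply Finset.Ico_disjoint_Ico_consecutive)]
    have hA : ∑ c ∈ Finset.Ico 0 (k-1), (if c + 1 < k then α else β) = (k-1 : ℕ) • α := by
      calc ∑ c ∈ Finset.Ico 0 (k-1), (if c + 1 < k then α else β)
          = ∑ _c ∈ Finset.Ico 0 (k-1), α :=
            Finset.sum_congr rfl (fun c hc =>
              if_pos (by rw [Finset.mem_Ico] at hc; omega))
        _ = (k-1 : ℕ) • α := by rw [Finset.sum_const, Nat.card_Ico, Nat.sub_zero]
    have hB : ∑ c ∈ Finset.Ico (k-1) (n+1), (if c + 1 < k then α else β)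
        = (n+1-(k-1) : ℕ) • β := by
      calc ∑ c ∈ Finset.Ico (k-1) (n+1), (if c + 1 < k then α else β)
          = ∑ _c ∈ Finset.Ico (k-1) (n+1), β :=
            Finset.sum_congr rfl (fun c hc =>
              if_neg (by rw [Finset.mem_Ico] at hc; omega))
        _ = (n+1-(k-1) : ℕ) • β := by rw [Finset.sum_const, Nat.card_Ico]
    rw [hA, hB, nsmul_eq_mul, nsmul_eq_mul, hα, hβ]
    have hc1 : ((k - 1 : ℕ) : ℚ) = (k : ℚ) - 1 := by
      push_cast [Nat.cast_sub hk1]; ring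
    have hc2 : ((n + 1 - (k - 1) : ℕ) : ℚ) = (n : ℚ) + 2 - (k : ℚ) := by
      push_cast [Nat.cast_sub (by omega : k - 1 ≤ n + 1), Nat.cast_sub hk1]; ring
    rw [hc1, hc2]
    have hn0 : ((n : ℚ) + 1) ≠ 0 := by positivity
    field_simp
    ring
  have : (M * U).det = M.det * U.det := Matrix.det_mul M U
  rw [hprod, hdiag, hrowsum, hUdet, mul_one] at this
  exact this.symm
end
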